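/- arXiv:1807.03957 — 4 statements merged into one kernel-verified Lean document; each statement's English description precedes it below -/
import Mathlib

section
/- If ab = cd (with |ab|<1), then f(a,b)f(c,d) + f(−a,−b)f(−c,−d) = 2·f(ac,bd)·f(ad,bc), where f(a,b) := Σ_{k∈ℤ} a^{k(k+1)/2} b^{k(k−1)/2}. -/
/-!
Write the theta function as `∑ₖ a^{T(k)} b^{T(-k)}` with `T(k) = k(k+1)/2`. Multiplying the series
and substituting `(m, n) = (r + s, r - s)`, the identity `T(r + s) = T(r) + T(s) + rs` together with
`ab = cd` turns each term `a^{T(m)} b^{T(-m)} c^{T(n)} d^{T(-n)}` into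
`(ac)^{T(r)} (bd)^{T(-r)} (ad)^{T(s)} (bc)^{T(-s)}`. Changing the signs of `a, b, c, d` multiplies the
`(m, n)` term by `(-1)^{m+n}`, so adding the two products kills the pairs with `m + n` odd (exactly
those not of the form `(r + s, r - s)`) and doubles the others.
-/

open PowerSeries Finset

/-- Ramanujan's general theta function `f(a,b) = ∑_{k∈ℤ} a^{k(k+1)/2} b^{k(k-1)/2}`.
Note `k(k+1)/2` and `k(k-1)/2` are nonnegative integers for every `k ∈ ℤ`. -/
noncomputable def fR (a b : ℂ) : ℂ :=
  ∑' k : ℤ, a ^ (k * (k + 1) / 2).toNat * b ^ (k * (k - 1) / 2).toNat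

namespace RamanujanTheta

def tri (k : ℤ) : ℕ := (k * (k + 1) / 2).toNat

lemma two_mul_tri (k : ℤ) : 2 * (tri k : ℤ) = k * (k + 1) := by
  obtain ⟨p, hp⟩ := Int.even_mul_succ_self k
  have hnonneg : 0 ≤ k * (k + 1) := by rcases le_or_gt 0 k with hk | hk <;> nlinarith
  rw [tri, Int.toNat_of_nonneg (by omega)]
  omega

lemma tri_add (r s : ℤ) : (tri (r + s) : ℤ) = tri r + tri s + r * s := by
  linarith [two_mul_tri r, two_mul_tri s, two_mul_tri (r + s)]

lemma tri_neg (k : ℤ) : (tri (-k) : ℤ) = tri k - k := by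
  linarith [two_mul_tri k, two_mul_tri (-k)]

lemma tri_natCast_add_one (n : ℕ) : tri (n + 1) = tri n + (n + 1) := by
  have := tri_add n 1
  have h1 : tri 1 = 1 := rfl
  omega

lemma tri_neg_natCast_add_one (n : ℕ) : tri (-(n + 1)) = tri (-n) + n := by
  have := tri_add (-n) (-1)
  have h1 : tri (-1) = 0 := rfl
  rw [show -(n : ℤ) + -1 = -(n + 1) by ring] at this
  omega

lemma pow_add_mul_pow_add_of_mul_eq {M : Type*} [CommMonoid M] {a b c d : M} (h : a * b = c * d)
    (A B C D n : ℕ) :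
    a ^ (A + n) * b ^ (B + n) * c ^ C * d ^ D = a ^ A * b ^ B * c ^ (C + n) * d ^ (D + n) :=
  calc a ^ (A + n) * b ^ (B + n) * c ^ C * d ^ D = a ^ A * b ^ B * c ^ C * d ^ D * (a * b) ^ n := by
        simp only [pow_add, mul_pow]; ac_rfl
    _ = a ^ A * b ^ B * c ^ C * d ^ D * (c * d) ^ n := by rw [h]
    _ = a ^ A * b ^ B * c ^ (C + n) * d ^ (D + n) := by simp only [pow_add, mul_pow]; ac_rfl

lemma pow_mul_pow_mul_pow_mul_pow_of_mul_eq {M : Type*} [CommMonoid M] {a b c d : M}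
    (h : a * b = c * d) {A B C D A' B' C' D' : ℕ} (k : ℤ) (hA : (A : ℤ) = A' + k)
    (hB : (B : ℤ) = B' + k) (hC : (C : ℤ) = C' - k) (hD : (D : ℤ) = D' - k) :
    a ^ A * b ^ B * c ^ C * d ^ D = a ^ A' * b ^ B' * c ^ C' * d ^ D' := by
  obtain ⟨n, rfl | rfl⟩ := Int.eq_nat_or_neg k
  · obtain ⟨rfl, rfl, rfl, rfl⟩ : A = A' + n ∧ B = B' + n ∧ C' = C + n ∧ D' = D + n := by omega
    exact pow_add_mul_pow_add_of_mul_eq h A' B' C D n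
  · obtain ⟨rfl, rfl, rfl, rfl⟩ : A' = A + n ∧ B' = B + n ∧ C = C' + n ∧ D = D' + n := by omega
    exact (pow_add_mul_pow_add_of_mul_eq h A B C' D' n).symm

noncomputable def thetaTerm (a b : ℂ) (k : ℤ) : ℂ := a ^ tri k * b ^ tri (-k)

lemma fR_eq_tsum_thetaTerm (a b : ℂ) : fR a b = ∑' k, thetaTerm a b k := by
  refine tsum_congr fun k => ?_
  rw [thetaTerm, tri, tri, show -k * (-k + 1) = k * (k - 1) by ring]

lemma thetaTerm_neg (a b : ℂ) (k : ℤ) : thetaTerm a b (-k) = thetaTerm b a k := by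
  rw [thetaTerm, thetaTerm, neg_neg, mul_comm]

lemma thetaTerm_natCast_add_one (a b : ℂ) (n : ℕ) :
    thetaTerm a b (n + 1) = a * (a * b) ^ n * thetaTerm a b n := by
  rw [thetaTerm, thetaTerm, tri_natCast_add_one, tri_neg_natCast_add_one]
  ring

lemma thetaTerm_neg_neg (a b : ℂ) (k : ℤ) :
    thetaTerm (-a) (-b) k = (-1 : ℂ) ^ k * thetaTerm a b k := by
  have hsign : (-1 : ℂ) ^ tri k * (-1) ^ tri (-k) = (-1) ^ k := by
    have hexp : ((tri k + tri (-k) : ℕ) : ℤ) = k + 2 * tri (-k) := by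
      push_cast; linarith [tri_neg k]
    rw [← pow_add, ← zpow_natCast, hexp, zpow_add₀ (by norm_num), zpow_mul]
    norm_num
  rw [thetaTerm, thetaTerm, neg_pow a, neg_pow b, ← hsign]
  ring

lemma thetaTerm_add_mul_thetaTerm_sub {a b c d : ℂ} (h : a * b = c * d) (r s : ℤ) :
    thetaTerm a b (r + s) * thetaTerm c d (r - s) =
      thetaTerm (a * c) (b * d) r * thetaTerm (a * d) (b * c) s := by
  have key := pow_mul_pow_mul_pow_mul_pow_of_mul_eq h (r * s)
    (A := tri (r + s)) (B := tri (-(r + s))) (C := tri (r - s)) (D := tri (-(r - s)))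
    (A' := tri r + tri s) (B' := tri (-r) + tri (-s))
    (C' := tri r + tri (-s)) (D' := tri (-r) + tri s)
    (by push_cast; rw [tri_add])
    (by push_cast; rw [neg_add, tri_add]; ring)
    (by push_cast; rw [sub_eq_add_neg, tri_add]; ring)
    (by push_cast; rw [neg_sub, sub_eq_add_neg, tri_add]; ring)
  simp only [thetaTerm, mul_pow, pow_add] at key ⊢
  linear_combination key

lemma summable_norm_thetaTerm_natCast {a b : ℂ} (h : ‖a * b‖ < 1) :
    Summable fun n : ℕ => ‖thetaTerm a b n‖ := by
  have hratio : Filter.Tendsto (fun n : ℕ => ‖a * (a * b) ^ n‖) Filter.atTop (nhds 0) := by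
    simpa using ((tendsto_pow_atTop_nhds_zero_of_norm_lt_one h).const_mul a).norm
  refine summable_of_ratio_norm_eventually_le (r := 1 / 2) (by norm_num) ?_
  filter_upwards [hratio.eventually_lt_const (by norm_num : (0 : ℝ) < 1 / 2)] with n hn
  rw [norm_norm, norm_norm, Nat.cast_add_one, thetaTerm_natCast_add_one, norm_mul]
  exact mul_le_mul_of_nonneg_right hn.le (norm_nonneg _)

lemma summable_norm_thetaTerm {a b : ℂ} (h : ‖a * b‖ < 1) :
    Summable fun k : ℤ => ‖thetaTerm a b k‖ := by
  refine summable_int_iff_summable_nat_and_neg.2 ⟨summable_norm_thetaTerm_natCast h, ?_⟩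
  simp only [thetaTerm_neg]
  exact summable_norm_thetaTerm_natCast (by rwa [mul_comm])

lemma hasSum_fR_mul_fR {a b c d : ℂ} (hab : ‖a * b‖ < 1) (hcd : ‖c * d‖ < 1) :
    HasSum (fun p : ℤ × ℤ => thetaTerm a b p.1 * thetaTerm c d p.2) (fR a b * fR c d) := by
  have hab' := summable_norm_thetaTerm hab
  have hcd' := summable_norm_thetaTerm hcd
  rw [fR_eq_tsum_thetaTerm, fR_eq_tsum_thetaTerm]
  exact hab'.of_norm.hasSum.mul hcd'.of_norm.hasSum (summable_mul_of_summable_norm hab' hcd')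

lemma thetaTerm_mul_add_thetaTerm_neg_mul (a b c d : ℂ) (m n : ℤ) :
    thetaTerm a b m * thetaTerm c d n + thetaTerm (-a) (-b) m * thetaTerm (-c) (-d) n =
      (1 + (-1 : ℂ) ^ (m + n)) * (thetaTerm a b m * thetaTerm c d n) := by
  rw [thetaTerm_neg_neg, thetaTerm_neg_neg, zpow_add₀ (by norm_num)]
  ring

lemma hasSum_comp_add_sub_iff {α : Type*} [AddCommMonoid α] [TopologicalSpace α]
    {F : ℤ × ℤ → α} {s : α} (hF : ∀ p : ℤ × ℤ, Odd (p.1 + p.2) → F p = 0) :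
    HasSum (fun q : ℤ × ℤ => F (q.1 + q.2, q.1 - q.2)) s ↔ HasSum F s := by
  refine Function.Injective.hasSum_iff (g := fun q : ℤ × ℤ => (q.1 + q.2, q.1 - q.2))
    (fun x y hxy => ?_) fun p hp => hF p ?_
  · simp only [Prod.mk.injEq] at hxy
    ext <;> omega
  · rw [← Int.not_even_iff_odd]
    rintro ⟨r, hr⟩
    exact hp ⟨(r, p.1 - r), by ext <;> simp only <;> omega⟩

end RamanujanTheta

open RamanujanTheta in
/-- If `ab = cd` (with `|ab| < 1`), then
`f(a,b)f(c,d) + f(-a,-b)f(-c,-d) = 2 f(ac,bd) f(ad,bc)`. -/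
theorem ramanujan_theta_add (a b c d : ℂ) (habs : ‖a * b‖ < 1)
    (h : a * b = c * d) :
    fR a b * fR c d + fR (-a) (-b) * fR (-c) (-d) =
      2 * fR (a * c) (b * d) * fR (a * d) (b * c) := by
  have hcd : ‖c * d‖ < 1 := h ▸ habs
  have hsq : ‖a * b * (c * d)‖ < 1 := by
    rw [← h, norm_mul]
    exact mul_lt_one_of_nonneg_of_lt_one_left (norm_nonneg _) habs habs.le
  have hLHS := (hasSum_fR_mul_fR habs hcd).add
    (hasSum_fR_mul_fR (a := -a) (b := -b) (c := -c) (d := -d) (by rwa [neg_mul_neg])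
      (by rwa [neg_mul_neg]))
  simp only [thetaTerm_mul_add_thetaTerm_neg_mul] at hLHS
  rw [← hasSum_comp_add_sub_iff fun p hp => by rw [hp.neg_one_zpow, add_neg_cancel, zero_mul]] at hLHS
  have hRHS := (hasSum_fR_mul_fR (a := a * c) (b := b * d) (c := a * d) (d := b * c)
    (by rwa [show a * c * (b * d) = a * b * (c * d) by ring])
    (by rwa [show a * d * (b * c) = a * b * (c * d) by ring])).mul_left 2
  rw [mul_assoc]
  refine hLHS.unique (hRHS.congr_fun fun q => ?_)
  rw [thetaTerm_add_mul_thetaTerm_sub h, show q.1 + q.2 + (q.1 - q.2) = 2 * q.1 by ring,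
    (even_two_mul q.1).neg_one_zpow]
  norm_num
end

section
/- If ab = cd (with |ab|<1), then f(a,b)f(c,d) − f(−a,−b)f(−c,−d) = 2a·f(b/c, ac²d)·f(b/d, acd²), where f(a,b) := Σ_{k∈ℤ} a^{k(k+1)/2} b^{k(k−1)/2}. -/
open PowerSeries Finset

lemma mul_sub_one_ediv_two_nonneg (k : ℤ) : 0 ≤ k * (k - 1) / 2 :=
  Int.ediv_nonneg (by rcases le_or_gt k 0 with hk | hk <;> nlinarith) zero_le_two

lemma mul_add_one_ediv_two_nonneg (k : ℤ) : 0 ≤ k * (k + 1) / 2 :=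
  Int.ediv_nonneg (by rcases le_or_gt k (-1) with hk | hk <;> nlinarith) zero_le_two

lemma mul_add_one_ediv_two_eq (k : ℤ) : k * (k + 1) / 2 = k * (k - 1) / 2 + k := by
  grind

lemma mul_sub_one_ediv_two_reindex (t u : ℤ) :
    (1 - t - u) * (1 - t - u - 1) / 2 + (u - t) * (u - t - 1) / 2 =
      2 * (t * (t - 1) / 2) + 2 * (u * (u - 1) / 2) + t := by
  have := Int.two_mul_ediv_two_of_even (Int.even_mul_pred_self (1 - t - u))
  have := Int.two_mul_ediv_two_of_even (Int.even_mul_pred_self (u - t))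
  have := Int.two_mul_ediv_two_of_even (Int.even_mul_pred_self t)
  have := Int.two_mul_ediv_two_of_even (Int.even_mul_pred_self u)
  grind

section Field

variable {K : Type*} [Field K]

def jacobiTerm (q z : K) (k : ℤ) : K := q ^ (k * (k - 1) / 2) * z ^ k

lemma pow_mul_pow_eq_jacobiTerm {x : K} (hx : x ≠ 0) (y : K) (k : ℤ) :
    x ^ (k * (k + 1) / 2).toNat * y ^ (k * (k - 1) / 2).toNat = jacobiTerm (x * y) x k := by
  rw [jacobiTerm, ← zpow_natCast, ← zpow_natCast,
    Int.toNat_of_nonneg (mul_add_one_ediv_two_nonneg k),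
    Int.toNat_of_nonneg (mul_sub_one_ediv_two_nonneg k), mul_add_one_ediv_two_eq, zpow_add₀ hx,
    mul_zpow]
  ring

lemma jacobiTerm_ne_zero {q z : K} (hq : q ≠ 0) (hz : z ≠ 0) (k : ℤ) : jacobiTerm q z k ≠ 0 :=
  mul_ne_zero (zpow_ne_zero _ hq) (zpow_ne_zero _ hz)

lemma jacobiTerm_neg_right (q z : K) (k : ℤ) :
    jacobiTerm q (-z) k = (-1) ^ k * jacobiTerm q z k := by
  rw [jacobiTerm, jacobiTerm, neg_eq_neg_one_mul, mul_zpow]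
  ring

lemma jacobiTerm_neg {q : K} (hq : q ≠ 0) (z : K) (k : ℤ) :
    jacobiTerm q z (-k) = jacobiTerm q (q / z) k := by
  rw [jacobiTerm, jacobiTerm, show -k * (-k - 1) = k * (k + 1) by ring, mul_add_one_ediv_two_eq,
    zpow_add₀ hq, div_zpow, zpow_neg]
  ring

lemma jacobiTerm_add_one {q z : K} (hq : q ≠ 0) (hz : z ≠ 0) (k : ℤ) :
    jacobiTerm q z (k + 1) = jacobiTerm q z k * (q ^ k * z) := by
  rw [jacobiTerm, jacobiTerm, show (k + 1) * (k + 1 - 1) = k * (k + 1) by ring,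
    mul_add_one_ediv_two_eq, zpow_add₀ hq, zpow_add_one₀ hz]
  ring

lemma jacobiTerm_mul_jacobiTerm {q a c : K} (hq : q ≠ 0) (ha : a ≠ 0) (hc : c ≠ 0) (t u : ℤ) :
    jacobiTerm q a (1 - t - u) * jacobiTerm q c (u - t) =
      a * (jacobiTerm (q ^ 2) (q / (a * c)) t * jacobiTerm (q ^ 2) (c / a) u) := by
  have hexp : q ^ ((1 - t - u) * (1 - t - u - 1) / 2) * q ^ ((u - t) * (u - t - 1) / 2) =
      (q ^ 2) ^ (t * (t - 1) / 2) * (q ^ 2) ^ (u * (u - 1) / 2) * q ^ t := by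
    rw [← zpow_add₀ hq, mul_sub_one_ediv_two_reindex, zpow_add₀ hq, zpow_add₀ hq, zpow_mul,
      zpow_mul]
    norm_cast
  simp only [jacobiTerm, div_zpow, mul_zpow, zpow_sub₀ ha, zpow_sub₀ hc, zpow_one]
  field_simp
  linear_combination hexp

end Field

lemma fR_eq_tsum_jacobiTerm {x : ℂ} (hx : x ≠ 0) (y : ℂ) :
    fR x y = ∑' k : ℤ, jacobiTerm (x * y) x k :=
  tsum_congr (pow_mul_pow_eq_jacobiTerm hx y)

section NormedField

variable {𝕜 : Type*} [NormedField 𝕜]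

lemma summable_norm_jacobiTerm_nat {q z : 𝕜} (hq : q ≠ 0) (hz : z ≠ 0) (hq1 : ‖q‖ < 1) :
    Summable fun n : ℕ => ‖jacobiTerm q z n‖ := by
  have hJ (n : ℕ) : ‖jacobiTerm q z n‖ ≠ 0 := norm_ne_zero_iff.mpr (jacobiTerm_ne_zero hq hz n)
  refine summable_of_ratio_test_tendsto_lt_one zero_lt_one (.of_forall hJ) ?_
  have hratio (n : ℕ) :
      ‖‖jacobiTerm q z (n + 1 : ℕ)‖‖ / ‖‖jacobiTerm q z n‖‖ = ‖q‖ ^ n * ‖z‖ := by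
    rw [norm_norm, norm_norm, Nat.cast_succ, jacobiTerm_add_one hq hz, norm_mul,
      mul_div_cancel_left₀ _ (hJ n), norm_mul, norm_zpow, zpow_natCast]
  simp only [hratio]
  simpa using (tendsto_pow_atTop_nhds_zero_of_lt_one (norm_nonneg q) hq1).mul_const ‖z‖

lemma summable_norm_jacobiTerm {q z : 𝕜} (hq : q ≠ 0) (hz : z ≠ 0) (hq1 : ‖q‖ < 1) :
    Summable fun k : ℤ => ‖jacobiTerm q z k‖ := by
  refine .of_nat_of_neg (summable_norm_jacobiTerm_nat hq hz hq1) ?_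
  simpa only [jacobiTerm_neg hq] using
    summable_norm_jacobiTerm_nat hq (div_ne_zero hq hz) hq1

end NormedField

lemma tsum_eq_tsum_reindex_of_even_add_eq_zero {α : Type*} [AddCommMonoid α]
    [TopologicalSpace α] {F : ℤ × ℤ → α} (hF : ∀ p : ℤ × ℤ, Even (p.1 + p.2) → F p = 0) :
    ∑' p, F p = ∑' p : ℤ × ℤ, F (1 - p.1 - p.2, p.2 - p.1) := by
  refine (Function.Injective.tsum_eq (fun p p' hpp' => ?_) fun p hp => ?_).symm
  · simp only [Prod.mk.injEq] at hpp'
    ext <;> omega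
  · obtain ⟨k, hk⟩ := Int.not_even_iff_odd.mp (mt (hF p) hp)
    exact ⟨(-k, p.2 - k), Prod.ext (by dsimp only; omega) (by dsimp only; omega)⟩

lemma tsum_mul_tsum_sub_tsum_neg_one_zpow_mul {𝕜 : Type*} [NormedField 𝕜] [CompleteSpace 𝕜]
    {f g : ℤ → 𝕜} (hf : Summable fun m => ‖f m‖) (hg : Summable fun n => ‖g n‖) :
    (∑' m, f m) * (∑' n, g n) - (∑' m, (-1) ^ m * f m) * (∑' n, (-1) ^ n * g n) =
      2 * ∑' p : ℤ × ℤ, f (1 - p.1 - p.2) * g (p.2 - p.1) := by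
  have hf' : Summable fun m => ‖(-1) ^ m * f m‖ := by simpa using hf
  have hg' : Summable fun n => ‖(-1) ^ n * g n‖ := by simpa using hg
  rw [tsum_mul_tsum_of_summable_norm hf hg, tsum_mul_tsum_of_summable_norm hf' hg',
    ← (summable_mul_of_summable_norm hf hg).tsum_sub (summable_mul_of_summable_norm hf' hg'),
    tsum_eq_tsum_reindex_of_even_add_eq_zero, ← tsum_mul_left]
  · refine tsum_congr fun p => ?_
    have hodd : Odd (1 - p.1 - p.2 + (p.2 - p.1)) := ⟨-p.1, by ring⟩
    have hsign : (-1 : 𝕜) ^ (1 - p.1 - p.2) * (-1) ^ (p.2 - p.1) = -1 := by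
      rw [← zpow_add₀ (neg_ne_zero.2 one_ne_zero), hodd.neg_one_zpow]
    linear_combination (-(f (1 - p.1 - p.2) * g (p.2 - p.1))) * hsign
  · intro p heven
    have hsign : (-1 : 𝕜) ^ p.1 * (-1) ^ p.2 = 1 := by
      rw [← zpow_add₀ (neg_ne_zero.2 one_ne_zero), heven.neg_one_zpow]
    linear_combination (-(f p.1 * g p.2)) * hsign

/-- If `ab = cd` (with `|ab| < 1`, `a,b,c,d ≠ 0`), then
`f(a,b)f(c,d) - f(-a,-b)f(-c,-d) = 2a f(b/c, ac²d) f(b/d, acd²)`. -/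
theorem ramanujan_theta_sub (a b c d : ℂ) (ha : a ≠ 0) (hb : b ≠ 0) (hc : c ≠ 0)
    (hd : d ≠ 0) (habs : ‖a * b‖ < 1) (h : a * b = c * d) :
    fR a b * fR c d - fR (-a) (-b) * fR (-c) (-d) =
      2 * a * fR (b / c) (a * c ^ 2 * d) * fR (b / d) (a * c * d ^ 2) := by
  have hq : a * b ≠ 0 := mul_ne_zero ha hb
  have hq2 : ‖(a * b) ^ 2‖ < 1 := by
    rw [norm_pow]; exact pow_lt_one₀ (norm_nonneg _) habs two_ne_zero
  have hbc : b / c * (a * c ^ 2 * d) = (a * b) ^ 2 := by field_simp; linear_combination -h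
  have hbd : b / d * (a * c * d ^ 2) = (a * b) ^ 2 := by field_simp; linear_combination -h
  have hbd' : b / d = c / a := by rw [div_eq_div_iff hd ha]; linear_combination h
  rw [fR_eq_tsum_jacobiTerm ha, fR_eq_tsum_jacobiTerm hc, fR_eq_tsum_jacobiTerm (neg_ne_zero.2 ha),
    fR_eq_tsum_jacobiTerm (neg_ne_zero.2 hc), fR_eq_tsum_jacobiTerm (div_ne_zero hb hc),
    fR_eq_tsum_jacobiTerm (div_ne_zero hb hd), neg_mul_neg, neg_mul_neg, ← h, hbc, hbd, hbd',
    ← mul_div_mul_left b c ha]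
  simp only [jacobiTerm_neg_right]
  rw [tsum_mul_tsum_sub_tsum_neg_one_zpow_mul (summable_norm_jacobiTerm hq ha habs)
    (summable_norm_jacobiTerm hq hc habs)]
  simp only [jacobiTerm_mul_jacobiTerm hq ha hc]
  have hsum₁ :=
    summable_norm_jacobiTerm (pow_ne_zero 2 hq) (div_ne_zero hq (mul_ne_zero ha hc)) hq2
  have hsum₂ := summable_norm_jacobiTerm (pow_ne_zero 2 hq) (div_ne_zero hc ha) hq2
  rw [tsum_mul_left, mul_assoc (2 * a), tsum_mul_tsum_of_summable_norm hsum₁ hsum₂, mul_assoc]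
end

section
/- As formal power series, f(−q,−q⁹)·f(−q³,−q⁷) = E₁E₁₀³/(E₂E₅), where f(a,b) := Σ_{k∈ℤ} a^{k(k+1)/2} b^{k(k−1)/2}. -/
open PowerSeries Finset

/-- `E j = (q^j; q^j)_∞ = ∏_{k≥1} (1 - q^{jk})` as a formal power series over ℤ
(the coefficient of `q^N` is stable once `N+1` factors are taken). -/
noncomputable def E (j : ℕ) : PowerSeries ℤ :=
  PowerSeries.mk fun N => PowerSeries.coeff (R := ℤ) N
    (∏ k ∈ range (N + 1), ((1 : PowerSeries ℤ) - X ^ (j + j * k)))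

/-- `f(c·q^a, d·q^b) = ∑_{k∈ℤ} c^{k(k+1)/2} d^{k(k-1)/2} q^{a·k(k+1)/2 + b·k(k-1)/2}`
as a formal power series over ℤ (for `c, d = ±1` and `a, b ≥ 1`; any `k` contributing
to the coefficient of `q^N` satisfies `k² ≤ N`). -/
noncomputable def fPS (c d : ℤ) (a b : ℕ) : PowerSeries ℤ :=
  PowerSeries.mk fun N => ∑ k ∈ Finset.Icc (-(N : ℤ) - 1) ((N : ℤ) + 1),
    if (a : ℤ) * (k * (k + 1) / 2) + (b : ℤ) * (k * (k - 1) / 2) = (N : ℤ) then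
      c ^ (k * (k + 1) / 2).toNat * d ^ (k * (k - 1) / 2).toNat
    else 0

/-!
By the Jacobi triple product,
`f(-q^A, -q^B) = (q^A; q^(A+B))_∞ (q^B; q^(A+B))_∞ (q^(A+B); q^(A+B))_∞`,
so the left-hand side is `(q, q³, q⁷, q⁹; q¹⁰)_∞ (q¹⁰; q¹⁰)_∞²`; splitting the factors of `(q; q)_∞`
according to the residue of the exponent mod 10 gives `(q, q³, q⁷, q⁹; q¹⁰)_∞ = E₁E₁₀ / (E₂E₅)`.

Everything is done with finite products, modulo `X^(N+1)`. The triple product comes from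
MacMahon's finite form `(-a; ab)_n (-b; ab)_m = ∑_r a^T(r-m) b^T(m-r) [n+m choose r]_(ab)`, with
`T k = k(k+1)/2`: multiplying by `(ab; ab)_n` turns the Gaussian binomials `[2n choose r]` into
`1 + O(X^(N+1))` for the central `r`, while the other monomials are themselves `O(X^(N+1))`.
-/

variable {R : Type*} [CommRing R]

def qPochhammer (a q : R) (n : ℕ) : R := ∏ j ∈ range n, (1 - a * q ^ j)

@[simp] lemma qPochhammer_zero (a q : R) : qPochhammer a q 0 = 1 := prod_range_zero _

lemma qPochhammer_succ (a q : R) (n : ℕ) :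
    qPochhammer a q (n + 1) = qPochhammer a q n * (1 - a * q ^ n) :=
  prod_range_succ _ _

lemma qPochhammer_mul_eq_prod (a q : R) (c n : ℕ) :
    qPochhammer a q (c * n) = ∏ i ∈ range c, qPochhammer (a * q ^ i) (q ^ c) n := by
  induction n with
  | zero => simp
  | succ n ih =>
    rw [Nat.mul_succ, qPochhammer, prod_range_add, ← qPochhammer, ih]
    simp only [qPochhammer_succ, prod_mul_distrib]
    congr 1
    refine prod_congr rfl fun i _ => ?_
    ring

lemma map_qPochhammer {S F : Type*} [CommRing S] [FunLike F R S] [RingHomClass F R S] (f : F)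
    (a q : R) (n : ℕ) :
    f (qPochhammer a q n) = qPochhammer (f a) (f q) n := by
  simp [qPochhammer, map_prod]

lemma qPochhammer_ten_dissection (q : R) (n : ℕ) :
    qPochhammer q q (10 * n) * qPochhammer (q ^ 10) (q ^ 10) n =
      qPochhammer q (q ^ 10) n * qPochhammer (q ^ 3) (q ^ 10) n * qPochhammer (q ^ 7) (q ^ 10) n *
        qPochhammer (q ^ 9) (q ^ 10) n *
          (qPochhammer (q ^ 2) (q ^ 2) (5 * n) * qPochhammer (q ^ 5) (q ^ 5) (2 * n)) := by
  simp only [qPochhammer_mul_eq_prod, prod_range_succ, prod_range_zero]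
  ring_nf

noncomputable def gaussBinom : ℕ → ℕ → Polynomial ℤ
  | _, 0 => 1
  | 0, _ + 1 => 0
  | m + 1, r + 1 => Polynomial.X ^ (r + 1) * gaussBinom m (r + 1) + gaussBinom m r

@[simp] lemma gaussBinom_zero_right (m : ℕ) : gaussBinom m 0 = 1 := by cases m <;> rfl

lemma gaussBinom_succ_succ (m r : ℕ) :
    gaussBinom (m + 1) (r + 1) = Polynomial.X ^ (r + 1) * gaussBinom m (r + 1) + gaussBinom m r :=
  rfl

lemma gaussBinom_eq_zero_of_lt : ∀ {m r : ℕ}, m < r → gaussBinom m r = 0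
  | 0, _ + 1, _ => rfl
  | m + 1, r + 1, h => by
    rw [gaussBinom_succ_succ, gaussBinom_eq_zero_of_lt (by omega : m < r + 1),
      gaussBinom_eq_zero_of_lt (by omega : m < r), mul_zero, add_zero]

@[simp] lemma gaussBinom_self : ∀ m : ℕ, gaussBinom m m = 1
  | 0 => rfl
  | m + 1 => by
    rw [gaussBinom_succ_succ, gaussBinom_eq_zero_of_lt m.lt_succ_self, gaussBinom_self m]
    simp

lemma gaussBinom_mul_qPochhammer : ∀ r d : ℕ,
    gaussBinom (r + d) r * (qPochhammer Polynomial.X Polynomial.X r *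
      qPochhammer Polynomial.X Polynomial.X d) = qPochhammer Polynomial.X Polynomial.X (r + d)
  | 0, d => by simp
  | r + 1, 0 => by simp
  | r + 1, d + 1 => by
    have h₁ := gaussBinom_mul_qPochhammer (r + 1) d
    have h₂ := gaussBinom_mul_qPochhammer r (d + 1)
    rw [show r + 1 + d = r + d + 1 by omega] at h₁
    rw [show r + (d + 1) = r + d + 1 by omega] at h₂
    rw [show r + 1 + (d + 1) = r + d + 1 + 1 by omega, gaussBinom_succ_succ]
    simp only [qPochhammer_succ] at h₁ h₂ ⊢
    linear_combination Polynomial.X ^ (r + 1) * (1 - Polynomial.X * Polynomial.X ^ d) * h₁ +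
      (1 - Polynomial.X * Polynomial.X ^ r) * h₂

lemma qPochhammer_X_ne_zero (n : ℕ) :
    qPochhammer (Polynomial.X : Polynomial ℤ) Polynomial.X n ≠ 0 := fun h => by
  simpa [qPochhammer, Polynomial.eval_prod] using congrArg (Polynomial.eval 0) h

lemma gaussBinom_symm (r d : ℕ) : gaussBinom (r + d) r = gaussBinom (r + d) d := by
  have h := gaussBinom_mul_qPochhammer d r
  rw [add_comm d r, mul_comm (qPochhammer _ _ d)] at h
  exact mul_right_cancel₀ (mul_ne_zero (qPochhammer_X_ne_zero r) (qPochhammer_X_ne_zero d))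
    ((gaussBinom_mul_qPochhammer r d).trans h.symm)

lemma gaussBinom_succ_succ' (r d : ℕ) :
    gaussBinom (r + d + 1) (r + 1) =
      gaussBinom (r + d) (r + 1) + Polynomial.X ^ d * gaussBinom (r + d) r := by
  cases d with
  | zero => simp [gaussBinom_eq_zero_of_lt]
  | succ e =>
    have h₁ : gaussBinom (r + e + 1) (e + 1) = gaussBinom (r + (e + 1)) r := by
      rw [show r + e + 1 = r + (e + 1) by omega, gaussBinom_symm]
    have h₂ : gaussBinom (r + e + 1) e = gaussBinom (r + (e + 1)) (r + 1) := by
      rw [show r + e + 1 = e + (r + 1) by omega, gaussBinom_symm,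
        show e + (r + 1) = r + (e + 1) by omega]
    rw [show r + (e + 1) + 1 = r + 1 + (e + 1) by omega, gaussBinom_symm,
      show r + 1 + (e + 1) = r + e + 1 + 1 by omega, gaussBinom_succ_succ, h₁, h₂, add_comm]

def tri (k : ℤ) : ℕ := (k * (k + 1) / 2).toNat

lemma natCast_tri (k : ℤ) : (tri k : ℤ) = k * (k + 1) / 2 := by
  refine Int.toNat_of_nonneg (Int.ediv_nonneg ?_ zero_le_two)
  rcases le_or_gt 0 k with hk | hk
  · positivity
  · exact mul_nonneg_of_nonpos_of_nonpos hk.le (by omega)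

lemma natCast_tri_neg (k : ℤ) : (tri (-k) : ℤ) = k * (k - 1) / 2 := by
  rw [natCast_tri]
  congr 1
  ring

lemma two_mul_natCast_tri (k : ℤ) : 2 * (tri k : ℤ) = k * (k + 1) := by
  rw [natCast_tri]
  exact Int.mul_ediv_cancel' (Int.even_mul_succ_self k).two_dvd

lemma natCast_tri_add_one (k : ℤ) : (tri (k + 1) : ℤ) = tri k + (k + 1) := by
  have h₁ := two_mul_natCast_tri k
  have h₂ := two_mul_natCast_tri (k + 1)
  linarith

@[simp] lemma tri_zero : tri 0 = 0 := rfl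

lemma tri_add_tri_neg (k : ℤ) : tri k + tri (-k) = k.natAbs ^ 2 := by
  have h₁ := two_mul_natCast_tri k
  have h₂ := two_mul_natCast_tri (-k)
  zify
  have h : 2 * ((tri k : ℤ) + tri (-k)) = 2 * |k| ^ 2 := by
    rw [sq_abs]; linear_combination h₁ + h₂
  linarith

/-- The `k`-th term `a^(k(k+1)/2) b^(k(k-1)/2)` of `f(a, b)`: note `k(k-1)/2 = tri (-k)`. -/
def thetaTerm (a b : R) (k : ℤ) : R := a ^ tri k * b ^ tri (-k)

@[simp] lemma thetaTerm_zero (a b : R) : thetaTerm a b 0 = 1 := by simp [thetaTerm]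

lemma thetaTerm_mul_left {a b : R} {k : ℤ} {n p : ℕ} (h : (n : ℤ) = p + k) :
    thetaTerm a b k * (a * (a * b) ^ n) = thetaTerm a b (k + 1) * (a * b) ^ p := by
  have h₁ := natCast_tri_add_one k
  have h₂ := natCast_tri_add_one (-(k + 1))
  rw [show -(k + 1) + 1 = -k by ring] at h₂
  have ea : tri k + 1 + n = tri (k + 1) + p := by omega
  have eb : tri (-k) + n = tri (-(k + 1)) + p := by omega
  calc thetaTerm a b k * (a * (a * b) ^ n) = a ^ (tri k + 1 + n) * b ^ (tri (-k) + n) := by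
        simp only [thetaTerm]; ring
    _ = thetaTerm a b (k + 1) * (a * b) ^ p := by
        rw [ea, eb, thetaTerm]; ring

lemma thetaTerm_mul_right {a b : R} {k : ℤ} {n p : ℕ} (h : (p : ℤ) = n + k) :
    thetaTerm a b k * (b * (a * b) ^ n) = thetaTerm a b (k - 1) * (a * b) ^ p := by
  have h₁ := natCast_tri_add_one (k - 1)
  have h₂ := natCast_tri_add_one (-k)
  rw [sub_add_cancel] at h₁
  rw [show -k + 1 = -(k - 1) by ring] at h₂
  have ea : tri k + n = tri (k - 1) + p := by omega
  have eb : tri (-k) + 1 + n = tri (-(k - 1)) + p := by omega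
  calc thetaTerm a b k * (b * (a * b) ^ n) = a ^ (tri k + n) * b ^ (tri (-k) + 1 + n) := by
        simp only [thetaTerm]; ring
    _ = thetaTerm a b (k - 1) * (a * b) ^ p := by
        rw [ea, eb, thetaTerm]; ring

noncomputable def gaussThetaSum (a b : R) (n m : ℕ) : R :=
  ∑ r ∈ range (n + m + 1), thetaTerm a b (r - m) * Polynomial.aeval (a * b) (gaussBinom (n + m) r)

lemma sum_range_succ_mul_aeval_gaussBinom (f : ℕ → R) (x : R) (N : ℕ) :
    ∑ r ∈ range (N + 2), f r * Polynomial.aeval x (gaussBinom N r) =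
      ∑ r ∈ range (N + 1), f r * Polynomial.aeval x (gaussBinom N r) := by
  rw [sum_range_succ, gaussBinom_eq_zero_of_lt N.lt_succ_self, map_zero, mul_zero, add_zero]

lemma gaussThetaSum_succ_left (a b : R) (n m : ℕ) :
    gaussThetaSum a b (n + 1) m = gaussThetaSum a b n m * (1 + a * (a * b) ^ n) := by
  set T : ℕ → R := fun r => thetaTerm a b (r - m) * Polynomial.aeval (a * b) (gaussBinom (n + m) r)
    with hT
  have hpascal : ∀ r ∈ range (n + m + 1),
      thetaTerm a b ((r + 1 : ℕ) - m) * Polynomial.aeval (a * b) (gaussBinom (n + m + 1) (r + 1)) =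
        T (r + 1) + T r * (a * (a * b) ^ n) := by
    intro r hr
    obtain ⟨d, hd⟩ := Nat.exists_eq_add_of_le (mem_range_succ_iff.mp hr)
    have hθ := thetaTerm_mul_left (a := a) (b := b) (k := r - m) (n := n) (p := d) (by omega)
    rw [sub_add_eq_add_sub] at hθ
    simp only [hT, hd, gaussBinom_succ_succ', map_add, map_mul, map_pow, Polynomial.aeval_X]
    push_cast
    linear_combination -Polynomial.aeval (a * b) (gaussBinom (r + d) r) * hθ
  have hshift : ∑ r ∈ range (n + m + 1), T (r + 1) + T 0 = gaussThetaSum a b n m := by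
    rw [← sum_range_succ']
    exact sum_range_succ_mul_aeval_gaussBinom _ _ _
  rw [gaussThetaSum, show n + 1 + m = n + m + 1 by ring, sum_range_succ', sum_congr rfl hpascal,
    sum_add_distrib, ← sum_mul, ← gaussThetaSum, ← hshift]
  simp only [hT, Nat.cast_zero, zero_sub, gaussBinom_zero_right, map_one, mul_one]
  ring

lemma gaussThetaSum_succ_right (a b : R) (n m : ℕ) :
    gaussThetaSum a b n (m + 1) = gaussThetaSum a b n m * (1 + b * (a * b) ^ m) := by
  set U : ℕ → R := fun r => thetaTerm a b (r - m - 1) * (a * b) ^ r *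
    Polynomial.aeval (a * b) (gaussBinom (n + m) r) with hU
  have hpascal : ∀ r ∈ range (n + m + 1),
      thetaTerm a b ((r + 1 : ℕ) - (m + 1 : ℕ)) *
          Polynomial.aeval (a * b) (gaussBinom (n + m + 1) (r + 1)) =
        U (r + 1) + thetaTerm a b (r - m) * Polynomial.aeval (a * b) (gaussBinom (n + m) r) := by
    intro r _
    have h : ((r + 1 : ℕ) : ℤ) - (m + 1 : ℕ) = r - m := by push_cast; ring
    have h' : ((r + 1 : ℕ) : ℤ) - m - 1 = r - m := by push_cast; ring
    simp only [hU, h, h', gaussBinom_succ_succ, map_add, map_mul, map_pow, Polynomial.aeval_X]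
    ring
  have hzero : thetaTerm a b ((0 : ℕ) - (m + 1 : ℕ)) *
      Polynomial.aeval (a * b) (gaussBinom (n + m + 1) 0) = U 0 := by
    simp only [hU, gaussBinom_zero_right, map_one, pow_zero, mul_one]
    congr 1
    push_cast
    ring
  have hθ : gaussThetaSum a b n m * (b * (a * b) ^ m) = ∑ r ∈ range (n + m + 1), U r := by
    rw [gaussThetaSum, sum_mul]
    refine sum_congr rfl fun r _ => ?_
    have hθ := thetaTerm_mul_right (a := a) (b := b) (k := r - m) (n := m) (p := r) (by omega)
    simp only [hU]
    linear_combination Polynomial.aeval (a * b) (gaussBinom (n + m) r) * hθ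
  have hshift : ∑ r ∈ range (n + m + 1), U (r + 1) + U 0 = ∑ r ∈ range (n + m + 1), U r := by
    rw [← sum_range_succ']
    exact sum_range_succ_mul_aeval_gaussBinom (fun r => thetaTerm a b (r - m - 1) * (a * b) ^ r) _ _
  rw [gaussThetaSum, show n + (m + 1) = n + m + 1 by ring, sum_range_succ', sum_congr rfl hpascal,
    sum_add_distrib, hzero, add_right_comm, hshift, ← hθ, ← gaussThetaSum]
  ring

theorem finite_jacobi_triple_product (a b : R) (n m : ℕ) :
    qPochhammer (-a) (a * b) n * qPochhammer (-b) (a * b) m = gaussThetaSum a b n m := by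
  induction n with
  | zero =>
    induction m with
    | zero => simp [gaussThetaSum]
    | succ m ih => rw [gaussThetaSum_succ_right, ← ih, qPochhammer_succ]; ring
  | succ n ih => rw [gaussThetaSum_succ_left, ← ih, qPochhammer_succ]; ring

lemma qPochhammer_sModEq_of_le {I : Ideal R} {a q : R} {m M : ℕ} (h : ∀ j ≥ m, a * q ^ j ∈ I)
    (hmM : m ≤ M) : qPochhammer a q M ≡ qPochhammer a q m [SMOD I] := by
  induction M, hmM using Nat.le_induction with
  | base => rfl
  | succ M hM ih =>
    have hfactor : 1 - a * q ^ M ≡ 1 [SMOD I] := by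
      rw [SModEq.sub_mem, sub_sub_cancel_left]
      exact I.neg_mem (h M hM)
    rw [qPochhammer_succ, ← mul_one (qPochhammer a q m)]
    exact ih.mul hfactor

lemma aeval_gaussBinom_mul_qPochhammer_sModEq {I : Ideal R} {Q : R} {m r s : ℕ}
    (hQ : ∀ j ≥ m, Q * Q ^ j ∈ I) (hu : IsUnit (qPochhammer Q Q m)) (hr : m ≤ r) (hs : m ≤ s) :
    Polynomial.aeval Q (gaussBinom (r + s) r) * qPochhammer Q Q m ≡ 1 [SMOD I] := by
  obtain ⟨u, hu⟩ := hu
  set G := Polynomial.aeval Q (gaussBinom (r + s) r)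
  have hprod : G * (qPochhammer Q Q r * qPochhammer Q Q s) = qPochhammer Q Q (r + s) := by
    simpa [map_qPochhammer, G] using
      congrArg (Polynomial.aeval Q) (gaussBinom_mul_qPochhammer r s)
  have hsq : G * (↑u * ↑u) ≡ ↑u [SMOD I] := by
    calc G * (↑u * ↑u)
        ≡ G * (qPochhammer Q Q r * qPochhammer Q Q s) [SMOD I] := by
          rw [hu]
          exact (SModEq.rfl.mul ((qPochhammer_sModEq_of_le hQ hr).mul
            (qPochhammer_sModEq_of_le hQ hs))).symm
      _ = qPochhammer Q Q (r + s) := hprod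
      _ ≡ ↑u [SMOD I] := hu ▸ qPochhammer_sModEq_of_le hQ (by omega)
  calc G * qPochhammer Q Q m = ↑u⁻¹ * (G * (↑u * ↑u)) := by
        rw [← hu, mul_left_comm, Units.inv_mul_cancel_left]
    _ ≡ ↑u⁻¹ * ↑u [SMOD I] := SModEq.rfl.mul hsq
    _ = 1 := u.inv_mul

lemma pow_dvd_thetaTerm {x a b : R} (ha : x ∣ a) (hb : x ∣ b) (k : ℤ) :
    x ^ (k.natAbs ^ 2) ∣ thetaTerm a b k := by
  rw [← tri_add_tri_neg, pow_add]
  exact mul_dvd_mul (pow_dvd_pow_of_dvd ha _) (pow_dvd_pow_of_dvd hb _)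

lemma Finset.sum_Icc_neg_eq_sum_range {M : Type*} [AddCommMonoid M] (f : ℤ → M) (n : ℕ) :
    ∑ k ∈ Icc (-n : ℤ) n, f k = ∑ r ∈ range (n + n + 1), f (r - n) := by
  refine sum_nbij' (fun k => (k + n).toNat) (fun r => r - n) ?_ ?_ ?_ ?_ ?_ <;>
    intro x hx <;> simp only [mem_Icc, mem_range] at hx ⊢
  all_goals first
    | omega
    | (congr 1; omega)

namespace PowerSeries

lemma sModEq_span_X_pow_iff {f g : R⟦X⟧} {m : ℕ} :
    f ≡ g [SMOD Ideal.span {(X : R⟦X⟧) ^ m}] ↔ ∀ i < m, coeff i f = coeff i g := by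
  simp only [SModEq.sub_mem, Ideal.mem_span_singleton, X_pow_dvd_iff, map_sub, sub_eq_zero]

lemma eq_of_forall_sModEq {f g : R⟦X⟧}
    (h : ∀ N, f ≡ g [SMOD Ideal.span {(X : R⟦X⟧) ^ (N + 1)}]) : f = g := by
  ext i
  exact sModEq_span_X_pow_iff.mp (h i) i i.lt_succ_self

lemma isUnit_qPochhammer {a q : R⟦X⟧} (ha : X ∣ a) (n : ℕ) : IsUnit (qPochhammer a q n) := by
  rw [isUnit_iff_constantCoeff, qPochhammer, map_prod]
  simp [X_dvd_iff.mp ha]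

theorem jacobi_triple_product_sModEq {a b : R⟦X⟧} (ha : X ∣ a) (hb : X ∣ b) {N n : ℕ}
    (hn : 2 * N + 1 ≤ n) :
    qPochhammer (-a) (a * b) n * qPochhammer (-b) (a * b) n * qPochhammer (a * b) (a * b) n ≡
      ∑ r ∈ range (n + n + 1), thetaTerm a b (r - n) [SMOD Ideal.span {(X : R⟦X⟧) ^ (N + 1)}] := by
  have hab : X ∣ a * b := dvd_mul_of_dvd_left ha b
  have hQ : ∀ j ≥ N + 1, a * b * (a * b) ^ j ∈ Ideal.span {(X : R⟦X⟧) ^ (N + 1)} := by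
    intro j hj
    rw [Ideal.mem_span_singleton, ← pow_succ']
    exact (pow_dvd_pow X (by omega)).trans (pow_dvd_pow_of_dvd hab _)
  rw [finite_jacobi_triple_product, gaussThetaSum, sum_mul]
  refine SModEq.sum fun r hr => ?_
  by_cases hk : ((r : ℤ) - n).natAbs ≤ N
  · obtain ⟨s, hs⟩ : ∃ s, n + n = r + s := ⟨n + n - r, by simp only [mem_range] at hr; omega⟩
    have hG := aeval_gaussBinom_mul_qPochhammer_sModEq hQ (isUnit_qPochhammer hab _)
      (r := r) (s := s) (by omega) (by omega)
    have hP := qPochhammer_sModEq_of_le hQ (show N + 1 ≤ n by omega)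
    rw [hs, mul_assoc]
    simpa using SModEq.rfl.mul ((SModEq.rfl.mul hP).trans hG)
  · have hθ : thetaTerm a b (r - n) ∈ Ideal.span {(X : R⟦X⟧) ^ (N + 1)} := by
      have := Nat.le_self_pow two_ne_zero ((r : ℤ) - n).natAbs
      rw [Ideal.mem_span_singleton]
      exact (pow_dvd_pow X (by omega)).trans (pow_dvd_thetaTerm ha hb _)
    rw [SModEq.sub_mem, mul_assoc, ← mul_sub_one]
    exact Ideal.mul_mem_right _ _ hθ

lemma thetaTerm_C_mul_X_pow (c d : R) (A B : ℕ) (k : ℤ) :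
    thetaTerm (C c * X ^ A) (C d * X ^ B) k =
      C (c ^ tri k * d ^ tri (-k)) * X ^ (A * tri k + B * tri (-k)) := by
  simp only [thetaTerm, mul_pow, ← map_pow, ← pow_mul, pow_add, map_mul]
  ring

lemma coeff_fPS (c d : ℤ) {A B : ℕ} (hA : 1 ≤ A) (hB : 1 ≤ B) {i n : ℕ} (hn : i + 1 ≤ n) :
    coeff i (fPS c d A B) = ∑ k ∈ Icc (-n : ℤ) n,
      if A * tri k + B * tri (-k) = i then c ^ tri k * d ^ tri (-k) else 0 := by
  rw [fPS, coeff_mk]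
  simp only [← natCast_tri, ← natCast_tri_neg, Int.toNat_natCast]
  norm_cast
  refine sum_subset (Icc_subset_Icc (by omega) (by omega)) fun k _ hk => if_neg ?_
  have hsq := tri_add_tri_neg k
  have hk' : i + 2 ≤ k.natAbs := by simp only [mem_Icc] at hk; omega
  have := Nat.mul_le_mul hk' hk'
  nlinarith

lemma fPS_sModEq_sum_thetaTerm (c d : ℤ) {A B : ℕ} (hA : 1 ≤ A) (hB : 1 ≤ B) {N n : ℕ}
    (hn : N + 1 ≤ n) :
    fPS c d A B ≡ ∑ r ∈ range (n + n + 1), thetaTerm (C c * X ^ A) (C d * X ^ B) (r - n)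
      [SMOD Ideal.span {(X : ℤ⟦X⟧) ^ (N + 1)}] := by
  refine sModEq_span_X_pow_iff.mpr fun i hi => ?_
  rw [coeff_fPS c d hA hB (show i + 1 ≤ n by omega), sum_Icc_neg_eq_sum_range, map_sum]
  refine sum_congr rfl fun r _ => ?_
  rw [thetaTerm_C_mul_X_pow, coeff_C_mul_X_pow]
  split_ifs <;> first | rfl | omega

lemma fPS_neg_one_sModEq {A B : ℕ} (hA : 1 ≤ A) (hB : 1 ≤ B) {N n : ℕ} (hn : 2 * N + 1 ≤ n) :
    fPS (-1) (-1) A B ≡ qPochhammer (X ^ A) (X ^ (A + B)) n * qPochhammer (X ^ B) (X ^ (A + B)) n *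
      qPochhammer (X ^ (A + B)) (X ^ (A + B)) n [SMOD Ideal.span {(X : ℤ⟦X⟧) ^ (N + 1)}] := by
  have hX {e : ℕ} (he : 1 ≤ e) : X ∣ C (-1 : ℤ) * X ^ e :=
    dvd_mul_of_dvd_right (dvd_pow_self X (by omega)) _
  have h := jacobi_triple_product_sModEq (hX hA) (hX hB) hn
  have hab : C (-1 : ℤ) * X ^ A * (C (-1) * X ^ B) = X ^ (A + B) := by
    rw [map_neg, map_one, pow_add]; ring
  have hθ := fPS_sModEq_sum_thetaTerm (-1) (-1) hA hB (N := N) (n := n) (by omega)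
  rw [hab] at h
  simp only [map_neg, map_one, neg_one_mul, neg_neg] at h hθ
  exact hθ.trans h.symm

lemma E_sModEq {j : ℕ} (hj : 1 ≤ j) {N M : ℕ} (hM : N + 1 ≤ M) :
    E j ≡ qPochhammer (X ^ j) (X ^ j) M [SMOD Ideal.span {(X : ℤ⟦X⟧) ^ (N + 1)}] := by
  refine sModEq_span_X_pow_iff.mpr fun i hi => ?_
  have hprod : ∏ k ∈ range (i + 1), ((1 : ℤ⟦X⟧) - X ^ (j + j * k)) =
      qPochhammer (X ^ j) (X ^ j) (i + 1) :=
    prod_congr rfl fun k _ => by rw [← pow_mul, ← pow_add]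
  have hstable :
      ∀ k ≥ i + 1, (X : ℤ⟦X⟧) ^ j * (X ^ j) ^ k ∈ Ideal.span {(X : ℤ⟦X⟧) ^ (i + 1)} := by
    intro k hk
    rw [Ideal.mem_span_singleton, ← pow_mul, ← pow_add]
    have := Nat.le_mul_of_pos_left k hj
    exact pow_dvd_pow X (by omega)
  rw [E, coeff_mk, hprod]
  have h := qPochhammer_sModEq_of_le hstable (show i + 1 ≤ M by omega)
  exact (sModEq_span_X_pow_iff.mp h i i.lt_succ_self).symm

lemma constantCoeff_E {j : ℕ} (hj : 1 ≤ j) : constantCoeff (E j) = 1 := by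
  rw [← coeff_zero_eq_constantCoeff_apply,
    sModEq_span_X_pow_iff.mp (E_sModEq hj le_rfl (N := 0)) 0 one_pos]
  simp [qPochhammer, show j ≠ 0 by omega]

end PowerSeries

/-- `f(-q,-q⁹)·f(-q³,-q⁷) = E₁E₁₀³/(E₂E₅)`. -/
theorem theta_prod_eta :
    fPS (-1) (-1) 1 9 * fPS (-1) (-1) 3 7 =
      E 1 * (E 10) ^ 3 * (E 2 * E 5).invOfUnit 1 := by
  have key : E 2 * E 5 * (fPS (-1) (-1) 1 9 * fPS (-1) (-1) 3 7) = E 1 * E 10 ^ 3 := by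
    refine PowerSeries.eq_of_forall_sModEq fun N => ?_
    set n := 2 * N + 1
    calc E 2 * E 5 * (fPS (-1) (-1) 1 9 * fPS (-1) (-1) 3 7)
        ≡ qPochhammer (X ^ 2) (X ^ 2) (5 * n) * qPochhammer (X ^ 5) (X ^ 5) (2 * n) *
            (qPochhammer (X ^ 1) (X ^ (1 + 9)) n * qPochhammer (X ^ 9) (X ^ (1 + 9)) n *
                qPochhammer (X ^ (1 + 9)) (X ^ (1 + 9)) n *
              (qPochhammer (X ^ 3) (X ^ (3 + 7)) n * qPochhammer (X ^ 7) (X ^ (3 + 7)) n *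
                qPochhammer (X ^ (3 + 7)) (X ^ (3 + 7)) n))
          [SMOD Ideal.span {(X : ℤ⟦X⟧) ^ (N + 1)}] :=
        ((E_sModEq (by norm_num) (by omega)).mul (E_sModEq (by norm_num) (by omega))).mul
          ((fPS_neg_one_sModEq le_rfl (by norm_num) le_rfl).mul
            (fPS_neg_one_sModEq (by norm_num) (by norm_num) le_rfl))
      _ = qPochhammer (X ^ 1) (X ^ 1) (10 * n) * qPochhammer (X ^ 10) (X ^ 10) n ^ 3 := by
        norm_num
        linear_combination
          -qPochhammer (X ^ 10) (X ^ 10) n ^ 2 * qPochhammer_ten_dissection (X : ℤ⟦X⟧) n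
      _ ≡ E 1 * E 10 ^ 3 [SMOD Ideal.span {(X : ℤ⟦X⟧) ^ (N + 1)}] :=
        ((E_sModEq le_rfl (by omega)).mul ((E_sModEq (by norm_num) (by omega)).pow 3)).symm
  have hunit : E 2 * E 5 * (E 2 * E 5).invOfUnit 1 = 1 :=
    mul_invOfUnit _ 1 (by simp [constantCoeff_E])
  linear_combination
    (E 2 * E 5).invOfUnit 1 * key - fPS (-1) (-1) 1 9 * fPS (-1) (-1) 3 7 * hunit
end

section
/- As formal power series, φ(q)φ(−q⁵) + φ(−q)φ(q⁵) = 2φ(q⁴)φ(q²⁰) − 8q⁶ψ(q⁸)ψ(q⁴⁰). -/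
/-! Splitting the summation index `j` of `φ(±q^c)` by parity gives the 2-dissections
`φ(±q^c) = φ(q^{4c}) ± 2 q^c ψ(q^{8c})`: the even `j = 2a` contribute `φ(q^{4c})`, and the odd
`j = 2a + 1` contribute `q^c q^{8c · a(a+1)/2}` with sign `±1`, each triangular number arising
from the two indices `a` and `-a - 1`. Substituting these at `c = 1` and `c = 5`, the identity
becomes `(A + 2qB)(C - 2q⁵D) + (A - 2qB)(C + 2q⁵D) = 2AC - 8q⁶BD`. -/

open PowerSeries Finset

/-- `φ(q^c) = ∑_{j∈ℤ} q^{c j²}` as a formal power series over ℤ. -/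
noncomputable def phiT (c : ℕ) : PowerSeries ℤ :=
  PowerSeries.mk fun N => ∑ j ∈ range (N + 1),
    if c * j ^ 2 = N then (if j = 0 then 1 else 2) else 0

/-- `φ(-q^c) = ∑_{j∈ℤ} (-1)^j q^{c j²}` as a formal power series over ℤ
(note `(-q^c)^{j²} = (-1)^j q^{c j²}`). -/
noncomputable def phiM (c : ℕ) : PowerSeries ℤ :=
  PowerSeries.mk fun N => ∑ j ∈ range (N + 1),
    if c * j ^ 2 = N then (if j = 0 then 1 else 2 * (-1) ^ j) else 0

/-- `ψ(q^c) = ∑_{j≥0} q^{c j(j+1)/2}` as a formal power series over ℤ. -/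
noncomputable def psiT (c : ℕ) : PowerSeries ℤ :=
  PowerSeries.mk fun N => ∑ j ∈ range (N + 1),
    if c * (j * (j + 1) / 2) = N then 1 else 0

/-- `∑_j w j X^{g j}`, in the shape of `phiT`, `phiM` and `psiT`. Truncating the sum to `j ≤ N`
loses nothing when `g` is strictly increasing (so `j ≤ g j`). -/
noncomputable def monomialSeries (g : ℕ → ℕ) (w : ℕ → ℤ) : PowerSeries ℤ :=
  PowerSeries.mk fun N => ∑ j ∈ range (N + 1), if g j = N then w j else 0

section monomialSeries

variable {g : ℕ → ℕ} {w : ℕ → ℤ}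

theorem coeff_monomialSeries_apply (hg : StrictMono g) (j : ℕ) :
    coeff (g j) (monomialSeries g w) = w j := by
  simp only [monomialSeries, coeff_mk, hg.injective.eq_iff, sum_ite_eq', mem_range]
  exact if_pos (Nat.lt_succ_of_le (hg.id_le j))

theorem coeff_monomialSeries_of_forall_ne {N : ℕ} (hN : ∀ j, g j ≠ N) :
    coeff N (monomialSeries g w) = 0 := by
  simp [monomialSeries, hN]

theorem eq_monomialSeries (hg : StrictMono g) {F : PowerSeries ℤ}
    (hF : ∀ j, coeff (g j) F = w j) (hF₀ : ∀ N, (∀ j, g j ≠ N) → coeff N F = 0) :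
    F = monomialSeries g w := by
  ext N
  by_cases hN : ∃ j, g j = N
  · obtain ⟨j, rfl⟩ := hN
    rw [hF, coeff_monomialSeries_apply hg]
  · push Not at hN
    rw [hF₀ N hN, coeff_monomialSeries_of_forall_ne hN]

theorem monomialSeries_eq_even_add_odd (hg : StrictMono g) :
    monomialSeries g w = monomialSeries (fun a => g (2 * a)) (fun a => w (2 * a)) +
      monomialSeries (fun a => g (2 * a + 1)) (fun a => w (2 * a + 1)) := by
  have heven : StrictMono fun a => g (2 * a) := hg.comp fun a b h => by omega
  have hodd : StrictMono fun a => g (2 * a + 1) := hg.comp fun a b h => by omega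
  refine (eq_monomialSeries hg (fun j => ?_) (fun N hN => ?_)).symm
  · rw [map_add]
    obtain ⟨a, rfl | rfl⟩ := Nat.even_or_odd' j
    · rw [coeff_monomialSeries_apply heven,
        coeff_monomialSeries_of_forall_ne fun b => hg.injective.ne (by omega), add_zero]
    · rw [coeff_monomialSeries_of_forall_ne fun b => hg.injective.ne (by omega),
        coeff_monomialSeries_apply hodd, zero_add]
  · rw [map_add, coeff_monomialSeries_of_forall_ne fun a => hN _,
      coeff_monomialSeries_of_forall_ne fun a => hN _, add_zero]

theorem X_pow_mul_monomialSeries (hg : StrictMono g) (c : ℕ) :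
    X ^ c * monomialSeries g w = monomialSeries (fun j => c + g j) w := by
  refine eq_monomialSeries (fun a b h => Nat.add_lt_add_left (hg h) c) (fun j => ?_)
    (fun N hN => ?_)
  · rw [coeff_X_pow_mul', if_pos (Nat.le_add_right c _), Nat.add_sub_cancel_left,
      coeff_monomialSeries_apply hg]
  · rw [coeff_X_pow_mul']
    split_ifs
    · exact coeff_monomialSeries_of_forall_ne fun j => by have := hN j; omega
    · rfl

theorem C_mul_monomialSeries (a : ℤ) :
    C a * monomialSeries g w = monomialSeries g fun j => a * w j := by
  ext N
  rw [monomialSeries, monomialSeries, coeff_C_mul, coeff_mk, coeff_mk, mul_sum]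
  simp only [mul_ite, mul_zero]

end monomialSeries

theorem strictMono_mul_sq {c : ℕ} (hc : 0 < c) : StrictMono fun j : ℕ => c * j ^ 2 :=
  fun _ _ h => Nat.mul_lt_mul_of_pos_left (Nat.pow_lt_pow_left h two_ne_zero) hc

theorem strictMono_mul_triangle {c : ℕ} (hc : 0 < c) :
    StrictMono fun j : ℕ => c * (j * (j + 1) / 2) :=
  strictMono_nat_of_lt_succ fun j => Nat.mul_lt_mul_of_pos_left (by
    rw [show (j + 1) * (j + 1 + 1) = j * (j + 1) + (j + 1) * 2 by ring,
      Nat.add_mul_div_right _ _ two_pos]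
    omega) hc

theorem odd_sq_eq_one_add_eight_mul_triangle (a : ℕ) :
    (2 * a + 1) ^ 2 = 1 + 8 * (a * (a + 1) / 2) := by
  have := Nat.div_mul_cancel (even_iff_two_dvd.mp (Nat.even_mul_succ_self a))
  nlinarith

theorem monomialSeries_mul_odd_sq_const {c : ℕ} (hc : 0 < c) (b : ℤ) :
    monomialSeries (fun a => c * (2 * a + 1) ^ 2) (fun _ => b) = C b * X ^ c * psiT (8 * c) := by
  rw [mul_assoc, show psiT (8 * c) = monomialSeries _ _ from rfl,
    X_pow_mul_monomialSeries (strictMono_mul_triangle (by omega)), C_mul_monomialSeries]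
  congr 1
  · funext a
    rw [odd_sq_eq_one_add_eight_mul_triangle]
    ring
  · simp

theorem phiT_eq_phiT_add_psiT {c : ℕ} (hc : 0 < c) :
    phiT c = phiT (4 * c) + 2 * X ^ c * psiT (8 * c) := by
  rw [show (2 : PowerSeries ℤ) = C 2 from (map_ofNat C 2).symm,
    ← monomialSeries_mul_odd_sq_const hc, show phiT c = monomialSeries _ _ from rfl,
    monomialSeries_eq_even_add_odd (strictMono_mul_sq hc)]
  congr 1
  show _ = monomialSeries _ _
  congr 1 <;> funext a
  · ring
  · simp

theorem phiM_eq_phiT_sub_psiT {c : ℕ} (hc : 0 < c) :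
    phiM c = phiT (4 * c) - 2 * X ^ c * psiT (8 * c) := by
  rw [sub_eq_add_neg, show -(2 * X ^ c * psiT (8 * c)) = C (-2) * X ^ c * psiT (8 * c) by simp,
    ← monomialSeries_mul_odd_sq_const hc, show phiM c = monomialSeries _ _ from rfl,
    monomialSeries_eq_even_add_odd (strictMono_mul_sq hc)]
  congr 1
  · show _ = monomialSeries _ _
    congr 1 <;> funext a
    · ring
    · simp [pow_mul]
  · congr 1
    funext a
    simp [pow_succ, pow_mul]

/-- `φ(q)φ(-q⁵) + φ(-q)φ(q⁵) = 2φ(q⁴)φ(q²⁰) - 8q⁶ψ(q⁸)ψ(q⁴⁰)`. -/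
theorem phi_sum :
    phiT 1 * phiM 5 + phiM 1 * phiT 5 =
      2 * phiT 4 * phiT 20 - 8 * X ^ 6 * psiT 8 * psiT 40 := by
  rw [phiT_eq_phiT_add_psiT one_pos, phiT_eq_phiT_add_psiT (by norm_num : 0 < 5),
    phiM_eq_phiT_sub_psiT one_pos, phiM_eq_phiT_sub_psiT (by norm_num : 0 < 5)]
  simp only [Nat.reduceMul, mul_one, pow_one]
  ring
end
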